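/- Let G be a finite connected graph of diameter 2 and x a vertex of G. If diam(G − x) = 2, or x lies in some gp-set of G, then gp(G) − 1 ≤ gp(G − x) ≤ gp(G). -/
import Mathlib


open SimpleGraph

/-- `S` is a *general position set* of `G`: no three distinct vertices of `S`
lie on a common shortest path (geodesic) of `G`. -/
def IsGPSet {V : Type*} (G : SimpleGraph V) (S : Set V) : Prop :=
  ∀ ⦃u v w : V⦄, u ∈ S → v ∈ S → w ∈ S → u ≠ v → u ≠ w → v ≠ w →
    ∀ p : G.Walk u v, p.IsPath → p.length = G.dist u v → w ∉ p.support

/-- The *general position number* of `G`: the maximum cardinality of a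
general position set. -/
noncomputable def gpNum {V : Type*} [Fintype V] (G : SimpleGraph V) : ℕ :=
  sSup {n : ℕ | ∃ S : Finset V, IsGPSet G ↑S ∧ S.card = n}

/-- The vertex-deleted subgraph `G - x`, induced on `V(G) \ {x}`. -/
def delVert {V : Type*} (G : SimpleGraph V) (x : V) : SimpleGraph {y : V // y ≠ x} :=
  G.comap Subtype.val

section Aux
variable {W : Type*} {G : SimpleGraph W}

private lemma walk_len2 {u v : W} (p : G.Walk u v) (h : p.length = 2) :
    ∃ a, ∃ (h1 : G.Adj u a) (h2 : G.Adj a v),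
      p = Walk.cons h1 (Walk.cons h2 Walk.nil) := by
  cases p with
  | nil => simp at h
  | cons h1 q =>
    cases q with
    | nil => simp at h
    | cons h2 r =>
      cases r with
      | nil => exact ⟨_, h1, h2, rfl⟩
      | cons h3 s => simp [Walk.length_cons] at h

private lemma two_le_length {u v w : W} (p : G.Walk u v) (hw : w ∈ p.support)
    (hwu : w ≠ u) (hwv : w ≠ v) : 2 ≤ p.length := by
  cases p with
  | nil => simp at hw; exact absurd hw hwu
  | cons h1 q =>
    cases q with
    | nil => simp at hw; rcases hw with h | h; exact absurd h hwu; exact absurd h hwv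
    | cons h2 r => simp [Walk.length_cons]

end Aux

section Main
variable {V : Type*} [Fintype V] [DecidableEq V]

private lemma gpSet_nonempty (G : SimpleGraph V) :
    {n : ℕ | ∃ S : Finset V, IsGPSet G ↑S ∧ S.card = n}.Nonempty :=
  ⟨0, ∅, by intro u v w hu _ _; simp at hu, by simp⟩

private lemma gpSet_bddAbove (G : SimpleGraph V) :
    BddAbove {n : ℕ | ∃ S : Finset V, IsGPSet G ↑S ∧ S.card = n} := by
  refine ⟨Fintype.card V, ?_⟩
  rintro n ⟨S, -, rfl⟩
  exact S.card_le_univ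

private lemma card_le_gpNum {G : SimpleGraph V} {S : Finset V} (h : IsGPSet G ↑S) :
    S.card ≤ gpNum G :=
  le_csSup (gpSet_bddAbove G) ⟨S, h, rfl⟩

private lemma exists_gp_set (G : SimpleGraph V) :
    ∃ S : Finset V, IsGPSet G ↑S ∧ S.card = gpNum G :=
  Nat.sSup_mem (gpSet_nonempty G) (gpSet_bddAbove G)

/-- A general position set of `G - x` is a general position set of `G`,
when `diam G = 2`. -/
private lemma lift_gpSet {G : SimpleGraph V} (hG : G.Connected) (hdiam : G.diam = 2) (x : V)
    {S' : Finset {y : V // y ≠ x}} (hS' : IsGPSet (delVert G x) ↑S') :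
    IsGPSet G ↑(S'.map (Function.Embedding.subtype _)) := by
  have hne : G.ediam ≠ ⊤ := ediam_ne_top_of_diam_ne_zero (by rw [hdiam]; norm_num)
  intro u v w hu hv hw huv huw hvw p hp hlen hmem
  simp only [Finset.coe_map, Set.mem_image, Finset.mem_coe,
    Function.Embedding.coe_subtype] at hu hv hw
  obtain ⟨u', hu', rfl⟩ := hu
  obtain ⟨v', hv', rfl⟩ := hv
  obtain ⟨w', hw', rfl⟩ := hw
  have hdle : G.dist (↑u') ↑v' ≤ 2 := hdiam ▸ dist_le_diam hne
  have h2le : 2 ≤ p.length := two_le_length p hmem (Ne.symm huw) (Ne.symm hvw)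
  have hlen2 : p.length = 2 := by omega
  obtain ⟨a, h1, h2, rfl⟩ := walk_len2 p hlen2
  have hwa : (w' : V) = a := by
    simp only [Walk.support_cons, Walk.support_nil, List.mem_cons,
      List.mem_singleton, List.not_mem_nil, or_false] at hmem
    rcases hmem with h | h | h
    · exact absurd h.symm huw
    · exact h
    · exact absurd h.symm hvw
  subst hwa
  have hdist2 : G.dist (↑u') ↑v' = 2 := hlen.symm.trans hlen2
  have hGuv : ¬ G.Adj ↑u' ↑v' := fun hadj => by
    have := dist_eq_one_iff_adj.mpr hadj
    omega
  have ha1 : (delVert G x).Adj u' w' := h1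
  have ha2 : (delVert G x).Adj w' v' := h2
  set q : (delVert G x).Walk u' v' := Walk.cons ha1 (Walk.cons ha2 Walk.nil) with hqdef
  have huv' : u' ≠ v' := fun h => huv (congrArg Subtype.val h)
  have huw' : u' ≠ w' := fun h => huw (congrArg Subtype.val h)
  have hvw' : v' ≠ w' := fun h => hvw (congrArg Subtype.val h)
  have hq : q.IsPath := by
    simp only [hqdef, Walk.isPath_def, Walk.support_cons, Walk.support_nil]
    simp [huv', huw', hvw', Ne.symm huv', Ne.symm huw', Ne.symm hvw']
  have hdistH : (delVert G x).dist u' v' = 2 := by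
    have hle : (delVert G x).dist u' v' ≤ 2 := by simpa [hqdef] using dist_le q
    have hne0 : (delVert G x).dist u' v' ≠ 0 := by
      rw [ne_eq, dist_eq_zero_iff_eq_or_not_reachable]
      push_neg
      exact ⟨huv', ⟨q⟩⟩
    have hne1 : (delVert G x).dist u' v' ≠ 1 := by
      intro h
      have ha : (delVert G x).Adj u' v' := dist_eq_one_iff_adj.mp h
      exact hGuv ha
    omega
  exact hS' hu' hv' hw' huv' huw' hvw' q hq (by simp [hqdef, hdistH]) (by simp [hqdef])

/-- Deleting `x` from a general position set of `G` gives a general position set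
of `G - x`, under either hypothesis. -/
private lemma erase_gpSet {G : SimpleGraph V} (hG : G.Connected) (hdiam : G.diam = 2) (x : V)
    {S : Finset V} (hS : IsGPSet G ↑S)
    (hcase : (delVert G x).diam = 2 ∨ x ∈ S) :
    IsGPSet (delVert G x) ↑(S.subtype (· ≠ x)) := by
  have hne : G.ediam ≠ ⊤ := ediam_ne_top_of_diam_ne_zero (by rw [hdiam]; norm_num)
  intro u' v' w' hu hv hw huv huw hvw q hq hlen hmem
  simp only [Finset.mem_coe, Finset.mem_subtype] at hu hv hw
  have hcuv : (u' : V) ≠ ↑v' := fun h => huv (Subtype.ext h)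
  have hcuw : (u' : V) ≠ ↑w' := fun h => huw (Subtype.ext h)
  have hcvw : (v' : V) ≠ ↑w' := fun h => hvw (Subtype.ext h)
  -- Step 1: dist in G - x is at most 2
  have hdle : (delVert G x).dist u' v' ≤ 2 := by
    rcases hcase with hd | hxS
    · exact hd ▸ dist_le_diam (ediam_ne_top_of_diam_ne_zero (by rw [hd]; norm_num))
    · by_cases hadj : G.Adj ↑u' ↑v'
      · have ha : (delVert G x).Adj u' v' := hadj
        exact le_trans (dist_le ha.toWalk) (by simp)
      · have hd1 : G.dist ↑u' ↑v' ≤ 2 := hdiam ▸ dist_le_diam hne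
        have hd0 : G.dist ↑u' ↑v' ≠ 0 := by
          rw [ne_eq, hG.dist_eq_zero_iff]; exact hcuv
        have hdne1 : G.dist ↑u' ↑v' ≠ 1 := fun h => hadj (dist_eq_one_iff_adj.mp h)
        have hd2 : G.dist ↑u' ↑v' = 2 := by omega
        obtain ⟨p0, hp0path, hp0len⟩ := (hG ↑u' ↑v').exists_path_of_dist
        have hp0len2 : p0.length = 2 := hp0len.trans hd2
        obtain ⟨a, g1, g2, rfl⟩ := walk_len2 p0 hp0len2
        have hax : a ≠ x := by
          intro h
          refine hS hu hv (h ▸ hxS) hcuv (h ▸ u'.2) (h ▸ v'.2) _ hp0path hp0len ?_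
          simp
        have e1 : (delVert G x).Adj u' ⟨a, hax⟩ := g1
        have e2 : (delVert G x).Adj ⟨a, hax⟩ v' := g2
        exact le_trans (dist_le (Walk.cons e1 (Walk.cons e2 Walk.nil))) (by simp)
  -- Step 2: the geodesic q has length 2, with w' as middle vertex
  have h2le : 2 ≤ q.length := two_le_length q hmem (Ne.symm huw) hvw.symm
  have hql : q.length = 2 := le_antisymm (hlen ▸ hdle) h2le
  obtain ⟨a', e1, e2, rfl⟩ := walk_len2 q hql
  have hwa : w' = a' := by
    simp only [Walk.support_cons, Walk.support_nil, List.mem_cons,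
      List.mem_singleton, List.not_mem_nil, or_false] at hmem
    rcases hmem with h | h | h
    · exact absurd h.symm huw
    · exact h
    · exact absurd h.symm hvw
  subst hwa
  have hdH2 : (delVert G x).dist u' v' = 2 := hlen.symm.trans hql
  have hnadj : ¬ G.Adj ↑u' ↑v' := by
    intro h
    have ha : (delVert G x).Adj u' v' := h
    have := dist_eq_one_iff_adj.mpr ha
    omega
  have hGd2 : G.dist ↑u' ↑v' = 2 := by
    have hle2 : G.dist ↑u' ↑v' ≤ 2 := hdiam ▸ dist_le_diam hne
    have hne0 : G.dist ↑u' ↑v' ≠ 0 := by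
      rw [ne_eq, hG.dist_eq_zero_iff]; exact hcuv
    have hne1 : G.dist ↑u' ↑v' ≠ 1 := fun h => hnadj (dist_eq_one_iff_adj.mp h)
    omega
  have g1 : G.Adj ↑u' ↑w' := e1
  have g2 : G.Adj ↑w' ↑v' := e2
  set P : G.Walk ↑u' ↑v' := Walk.cons g1 (Walk.cons g2 Walk.nil) with hPdef
  have hPpath : P.IsPath := by
    simp only [hPdef, Walk.isPath_def, Walk.support_cons, Walk.support_nil]
    simp [hcuv, hcuw, hcvw, Ne.symm hcuv, Ne.symm hcuw, Ne.symm hcvw]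
  exact hS hu hv hw hcuv hcuw hcvw P hPpath (by simp [hPdef, hGd2]) (by simp [hPdef])

end Main

/-- Let `G` be a finite connected graph of diameter 2 and `x` a
vertex of `G`.  If `diam(G - x) = 2`, or `x` lies in some gp-set of `G`, then
`gp(G) - 1 ≤ gp(G - x) ≤ gp(G)`. -/
theorem stmt_8 {V : Type*} [Fintype V] [DecidableEq V] (G : SimpleGraph V)
    (hG : G.Connected) (hdiam : G.diam = 2) (x : V)
    (hx : (delVert G x).diam = 2 ∨
      ∃ S : Finset V, IsGPSet G ↑S ∧ S.card = gpNum G ∧ x ∈ S) :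
    gpNum G - 1 ≤ gpNum (delVert G x) ∧ gpNum (delVert G x) ≤ gpNum G := by
  constructor
  · -- lower bound
    obtain ⟨S, hS, hcard, hcase⟩ :
        ∃ S : Finset V, IsGPSet G ↑S ∧ S.card = gpNum G ∧
          ((delVert G x).diam = 2 ∨ x ∈ S) := by
      rcases hx with hd | ⟨S, hS, hcard, hxS⟩
      · obtain ⟨S, hS, hcard⟩ := exists_gp_set G
        exact ⟨S, hS, hcard, Or.inl hd⟩
      · exact ⟨S, hS, hcard, Or.inr hxS⟩
    have hgp := erase_gpSet hG hdiam x hS hcase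
    have hcardle := card_le_gpNum hgp
    have hc1 : (S.subtype (· ≠ x)).card = (S.erase x).card := by
      rw [Finset.card_subtype, Finset.filter_ne']
    have hc2 : S.card - 1 ≤ (S.erase x).card := Finset.pred_card_le_card_erase
    omega
  · -- upper bound
    refine csSup_le (gpSet_nonempty _) ?_
    rintro n ⟨S', hS', rfl⟩
    have := card_le_gpNum (lift_gpSet hG hdiam x hS')
    simpa [Finset.card_map] using this
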